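/- Let σ₀,…,σ₄, τ₀,…,τ₄ ∈ ℝ. Define R(t) = σ₀t² + σ₁(t−1)² + σ₂t²(t−1)² + σ₃t²(t−1) + σ₄t(t−1) and S(t) = τ₀t² + τ₁(t−1)² + τ₂t²(t−1)² + τ₃t²(t−1) + τ₄t(t−1). Let y be three times differentiable on an open interval I ⊆ ℝ with y'(x) ≠ 0, y(x) ∉ {0,1}, R(y(x)) ≠ 0, and (y'(x))² = 4·y(x)²·(y(x)−1)²/R(y(x)) for all x ∈ I. Then for every x ∈ I (writing y = y(x)): −S(y)/R(y) − (1/2)·{y,x}(x) = (y²(y−1)²/R(y)²)·[ R''(y) + ((2y−1)·R'(y) − 4·R(y))/(y(y−1)) + (2y−1)²·R(y)/(y²(y−1)²) − (5/4)·R'(y)²/R(y) ] − S(y)/R(y). -/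

import Mathlib

/-!
If `y' ^ 2 = g ∘ y` with `y' ≠ 0`, differentiating gives `y'' = g'(y) / 2` and `y''' = g''(y) y' / 2`,
so the Schwarzian derivative depends on `y` only through `g`: `{y, x} = g''/2 - 3 g'^2 / (8 g)`,
evaluated at `y x`. For `g = 4 t² (t - 1)² / R` this is a rational function of `t`, `R`, `R'`, `R''`,
and the closed form of the potential is the resulting identity of rational functions.
-/

/-- The polynomial `R` of the confluent-Heun-class Bose invariant. -/
def cheunR (σ₀ σ₁ σ₂ σ₃ σ₄ : ℝ) : ℝ → ℝ := fun t =>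
  σ₀ * t ^ 2 + σ₁ * (t - 1) ^ 2 + σ₂ * t ^ 2 * (t - 1) ^ 2
    + σ₃ * t ^ 2 * (t - 1) + σ₄ * t * (t - 1)

/-- The polynomial `S` of the confluent-Heun-class Bose invariant. -/
def cheunS (τ₀ τ₁ τ₂ τ₃ τ₄ : ℝ) : ℝ → ℝ := fun t =>
  τ₀ * t ^ 2 + τ₁ * (t - 1) ^ 2 + τ₂ * t ^ 2 * (t - 1) ^ 2
    + τ₃ * t ^ 2 * (t - 1) + τ₄ * t * (t - 1)

noncomputable def schwarzian (y : ℝ → ℝ) (x : ℝ) : ℝ :=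
  deriv (fun t => deriv (deriv y) t / deriv y t) x - 1 / 2 * (deriv (deriv y) x / deriv y x) ^ 2

section AutonomousODE

variable {y g g' : ℝ → ℝ} {I : Set ℝ}

theorem deriv_deriv_eq_of_deriv_sq_eq {z : ℝ} (hz : z ∈ I) (hI : IsOpen I)
    (hy : DifferentiableAt ℝ y z) (hy' : DifferentiableAt ℝ (deriv y) z) (hy0 : deriv y z ≠ 0)
    (hg : HasDerivAt g (g' (y z)) (y z)) (heq : ∀ w ∈ I, deriv y w ^ 2 = g (y w)) :
    deriv (deriv y) z = g' (y z) / 2 := by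
  have hsq : HasDerivAt (fun w => deriv y w ^ 2) (g' (y z) * deriv y z) z :=
    (hg.comp z hy.hasDerivAt).congr_of_eventuallyEq
      (Filter.eventuallyEq_of_mem (hI.mem_nhds hz) heq)
  have h := hsq.unique (hy'.hasDerivAt.pow 2)
  apply mul_left_cancel₀ hy0
  push_cast at h
  linear_combination -h / 2

theorem schwarzian_eq_of_deriv_sq_eq {x g'' : ℝ} (hx : x ∈ I) (hI : IsOpen I)
    (hy : ∀ z ∈ I, DifferentiableAt ℝ y z) (hy' : ∀ z ∈ I, DifferentiableAt ℝ (deriv y) z)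
    (hy0 : ∀ z ∈ I, deriv y z ≠ 0) (hg : ∀ z ∈ I, HasDerivAt g (g' (y z)) (y z))
    (hg' : HasDerivAt g' g'' (y x)) (heq : ∀ z ∈ I, deriv y z ^ 2 = g (y z)) :
    schwarzian y x = g'' / 2 - 3 / 8 * g' (y x) ^ 2 / g (y x) := by
  have hy2 : ∀ z ∈ I, deriv (deriv y) z = g' (y z) / 2 := fun z hz =>
    deriv_deriv_eq_of_deriv_sq_eq hz hI (hy z hz) (hy' z hz) (hy0 z hz) (hg z hz) heq
  have hy3 : HasDerivAt (deriv (deriv y)) (g'' * deriv y x / 2) x :=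
    ((hg'.comp x (hy x hx).hasDerivAt).div_const 2).congr_of_eventuallyEq
      (Filter.eventuallyEq_of_mem (hI.mem_nhds hx) hy2)
  have hy0x := hy0 x hx
  rw [schwarzian, (hy3.fun_div (hy' x hx).hasDerivAt hy0x).deriv, hy2 x hx, ← heq x hx]
  field_simp
  ring

end AutonomousODE

theorem hasDerivAt_deriv_div {P R : ℝ → ℝ} {t : ℝ} (hP : DifferentiableAt ℝ P t)
    (hP' : DifferentiableAt ℝ (deriv P) t) (hR : DifferentiableAt ℝ R t)
    (hR' : DifferentiableAt ℝ (deriv R) t) (hRt : R t ≠ 0) :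
    HasDerivAt (fun s => (deriv P s * R s - P s * deriv R s) / R s ^ 2)
      (((deriv (deriv P) t * R t - P t * deriv (deriv R) t) * R t
        - 2 * (deriv P t * R t - P t * deriv R t) * deriv R t) / R t ^ 3) t := by
  have h := ((hP'.hasDerivAt.mul hR.hasDerivAt).sub (hP.hasDerivAt.mul hR'.hasDerivAt)).fun_div
    (hR.hasDerivAt.pow 2) (pow_ne_zero 2 hRt)
  refine h.congr_deriv ?_
  simp only [Pi.mul_apply, Pi.sub_apply, Pi.pow_apply]
  field_simp
  ring

theorem hasDerivAt_four_mul_sq_mul_sub_one_sq (t : ℝ) :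
    HasDerivAt (fun s : ℝ => 4 * s ^ 2 * (s - 1) ^ 2) (8 * t * (t - 1) * (2 * t - 1)) t := by
  have h := ((hasDerivAt_pow 2 t).const_mul 4).mul (((hasDerivAt_id t).sub_const 1).pow 2)
  refine h.congr_deriv ?_
  simp only [Pi.pow_apply, id]
  push_cast
  ring

theorem hasDerivAt_eight_mul_mul_sub_one_mul (t : ℝ) :
    HasDerivAt (fun s : ℝ => 8 * s * (s - 1) * (2 * s - 1)) (8 * (6 * t ^ 2 - 6 * t + 1)) t := by
  have h := (((hasDerivAt_id t).const_mul 8).mul ((hasDerivAt_id t).sub_const 1)).mul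
    (((hasDerivAt_id t).const_mul 2).sub_const 1)
  refine h.congr_deriv ?_
  simp only [Pi.mul_apply, id]
  ring

theorem deriv_four_mul_sq_mul_sub_one_sq :
    deriv (fun s : ℝ => 4 * s ^ 2 * (s - 1) ^ 2) = fun t => 8 * t * (t - 1) * (2 * t - 1) :=
  funext fun t => (hasDerivAt_four_mul_sq_mul_sub_one_sq t).deriv

theorem contDiff_cheunR (σ₀ σ₁ σ₂ σ₃ σ₄ : ℝ) : ContDiff ℝ 2 (cheunR σ₀ σ₁ σ₂ σ₃ σ₄) := by
  unfold cheunR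
  fun_prop

/-- `-(1/2) (g''/2 - 3 g'^2/(8 g))` for `g = 4 t² (t - 1)² / r`, with `r₁, r₂` standing for `r', r''`. -/
theorem half_schwarzian_potential_identity (t r r₁ r₂ : ℝ) (ht₀ : t ≠ 0) (ht₁ : t - 1 ≠ 0)
    (hr : r ≠ 0) :
    -(1 / 2) * ((((8 * (6 * t ^ 2 - 6 * t + 1) * r - 4 * t ^ 2 * (t - 1) ^ 2 * r₂) * r
        - 2 * (8 * t * (t - 1) * (2 * t - 1) * r - 4 * t ^ 2 * (t - 1) ^ 2 * r₁) * r₁) / r ^ 3) / 2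
      - 3 / 8 * ((8 * t * (t - 1) * (2 * t - 1) * r - 4 * t ^ 2 * (t - 1) ^ 2 * r₁) / r ^ 2) ^ 2
        / (4 * t ^ 2 * (t - 1) ^ 2 / r))
      = (t ^ 2 * (t - 1) ^ 2 / r ^ 2) * (r₂ + ((2 * t - 1) * r₁ - 4 * r) / (t * (t - 1))
        + (2 * t - 1) ^ 2 * r / (t ^ 2 * (t - 1) ^ 2) - 5 / 4 * r₁ ^ 2 / r) := by
  field_simp
  ring

theorem stmt_15_general (σ₀ σ₁ σ₂ σ₃ σ₄ τ₀ τ₁ τ₂ τ₃ τ₄ : ℝ)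
    (y : ℝ → ℝ) (I : Set ℝ) (hI : IsOpen I)
    (hy : ∀ x ∈ I, DifferentiableAt ℝ y x)
    (hy' : ∀ x ∈ I, DifferentiableAt ℝ (deriv y) x)
    (hy0 : ∀ x ∈ I, deriv y x ≠ 0)
    (hy01 : ∀ x ∈ I, y x ≠ 0 ∧ y x ≠ 1)
    (hR : ∀ x ∈ I, cheunR σ₀ σ₁ σ₂ σ₃ σ₄ (y x) ≠ 0)
    (heq : ∀ x ∈ I, (deriv y x) ^ 2
      = 4 * (y x) ^ 2 * (y x - 1) ^ 2 / cheunR σ₀ σ₁ σ₂ σ₃ σ₄ (y x)) :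
    ∀ x ∈ I,
      -(cheunS τ₀ τ₁ τ₂ τ₃ τ₄ (y x)) / cheunR σ₀ σ₁ σ₂ σ₃ σ₄ (y x)
          - (1 / 2) * (deriv (fun t => deriv (deriv y) t / deriv y t) x
              - (1 / 2) * (deriv (deriv y) x / deriv y x) ^ 2)
        = ((y x) ^ 2 * (y x - 1) ^ 2 / (cheunR σ₀ σ₁ σ₂ σ₃ σ₄ (y x)) ^ 2) *
            (deriv (deriv (cheunR σ₀ σ₁ σ₂ σ₃ σ₄)) (y x)
              + ((2 * y x - 1) * deriv (cheunR σ₀ σ₁ σ₂ σ₃ σ₄) (y x)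
                  - 4 * cheunR σ₀ σ₁ σ₂ σ₃ σ₄ (y x)) / (y x * (y x - 1))
              + (2 * y x - 1) ^ 2 * cheunR σ₀ σ₁ σ₂ σ₃ σ₄ (y x)
                / ((y x) ^ 2 * (y x - 1) ^ 2)
              - (5 / 4) * (deriv (cheunR σ₀ σ₁ σ₂ σ₃ σ₄) (y x)) ^ 2
                / cheunR σ₀ σ₁ σ₂ σ₃ σ₄ (y x))
          - cheunS τ₀ τ₁ τ₂ τ₃ τ₄ (y x) / cheunR σ₀ σ₁ σ₂ σ₃ σ₄ (y x) := by
  have hRdiff := (contDiff_cheunR σ₀ σ₁ σ₂ σ₃ σ₄).differentiable (by norm_num)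
  have hRdiff' := (contDiff_cheunR σ₀ σ₁ σ₂ σ₃ σ₄).differentiable_deriv_two
  have hPdiff (t : ℝ) := (hasDerivAt_four_mul_sq_mul_sub_one_sq t).differentiableAt
  have hPdiff' (t : ℝ) : DifferentiableAt ℝ (deriv fun s : ℝ => 4 * s ^ 2 * (s - 1) ^ 2) t := by
    rw [deriv_four_mul_sq_mul_sub_one_sq]
    exact (hasDerivAt_eight_mul_mul_sub_one_mul t).differentiableAt
  intro x hx
  have hS := schwarzian_eq_of_deriv_sq_eq
    (g := fun t => 4 * t ^ 2 * (t - 1) ^ 2 / cheunR σ₀ σ₁ σ₂ σ₃ σ₄ t) hx hI hy hy' hy0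
    (fun z hz => (hPdiff (y z)).hasDerivAt.fun_div (hRdiff (y z)).hasDerivAt (hR z hz))
    (hasDerivAt_deriv_div (hPdiff (y x)) (hPdiff' (y x)) (hRdiff (y x)) (hRdiff' (y x)) (hR x hx))
    heq
  change _ - 1 / 2 * schwarzian y x = _
  rw [hS, deriv_four_mul_sq_mul_sub_one_sq, (hasDerivAt_eight_mul_mul_sub_one_mul (y x)).deriv]
  linear_combination half_schwarzian_potential_identity (y x) (cheunR σ₀ σ₁ σ₂ σ₃ σ₄ (y x))
    (deriv (cheunR σ₀ σ₁ σ₂ σ₃ σ₄) (y x)) (deriv (deriv (cheunR σ₀ σ₁ σ₂ σ₃ σ₄)) (y x))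
    (hy01 x hx).1 (sub_ne_zero.mpr (hy01 x hx).2) (hR x hx)

/-- closed form of the potential of the confluent Heun class. -/
theorem stmt_15 (σ₀ σ₁ σ₂ σ₃ σ₄ τ₀ τ₁ τ₂ τ₃ τ₄ : ℝ)
    (y : ℝ → ℝ) (I : Set ℝ) (hI : IsOpen I)
    (hy : ∀ x ∈ I, DifferentiableAt ℝ y x)
    (hy' : ∀ x ∈ I, DifferentiableAt ℝ (deriv y) x)
    (hy'' : ∀ x ∈ I, DifferentiableAt ℝ (deriv (deriv y)) x)
    (hy0 : ∀ x ∈ I, deriv y x ≠ 0)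
    (hy01 : ∀ x ∈ I, y x ≠ 0 ∧ y x ≠ 1)
    (hR : ∀ x ∈ I, cheunR σ₀ σ₁ σ₂ σ₃ σ₄ (y x) ≠ 0)
    (heq : ∀ x ∈ I, (deriv y x) ^ 2
      = 4 * (y x) ^ 2 * (y x - 1) ^ 2 / cheunR σ₀ σ₁ σ₂ σ₃ σ₄ (y x)) :
    ∀ x ∈ I,
      -(cheunS τ₀ τ₁ τ₂ τ₃ τ₄ (y x)) / cheunR σ₀ σ₁ σ₂ σ₃ σ₄ (y x)
          - (1 / 2) * (deriv (fun t => deriv (deriv y) t / deriv y t) x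
              - (1 / 2) * (deriv (deriv y) x / deriv y x) ^ 2)
        = ((y x) ^ 2 * (y x - 1) ^ 2 / (cheunR σ₀ σ₁ σ₂ σ₃ σ₄ (y x)) ^ 2) *
            (deriv (deriv (cheunR σ₀ σ₁ σ₂ σ₃ σ₄)) (y x)
              + ((2 * y x - 1) * deriv (cheunR σ₀ σ₁ σ₂ σ₃ σ₄) (y x)
                  - 4 * cheunR σ₀ σ₁ σ₂ σ₃ σ₄ (y x)) / (y x * (y x - 1))
              + (2 * y x - 1) ^ 2 * cheunR σ₀ σ₁ σ₂ σ₃ σ₄ (y x)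
                / ((y x) ^ 2 * (y x - 1) ^ 2)
              - (5 / 4) * (deriv (cheunR σ₀ σ₁ σ₂ σ₃ σ₄) (y x)) ^ 2
                / cheunR σ₀ σ₁ σ₂ σ₃ σ₄ (y x))
          - cheunS τ₀ τ₁ τ₂ τ₃ τ₄ (y x) / cheunR σ₀ σ₁ σ₂ σ₃ σ₄ (y x) :=
  stmt_15_general σ₀ σ₁ σ₂ σ₃ σ₄ τ₀ τ₁ τ₂ τ₃ τ₄ y I hI hy hy' hy0 hy01 hR heq
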